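/- Let K ⊆ L be a field extension and X an indeterminate over L. Then R = K + XL[X] is condensed if and only if the extension K ⊆ L is vs-closed, i.e., for every pair of K-subspaces V, W of L, the K-subspace generated by {vw : v ∈ V, w ∈ W} equals {vw : v ∈ V, w ∈ W}. -/

import Mathlib

/-- An integral domain is condensed if for every pair of nonzero ideals `I, J`,
the product `I*J` equals the set of products `{i*j : i ∈ I, j ∈ J}`. -/
def IsCondensed (D : Type*) [CommRing D] : Prop :=
  ∀ I J : Ideal D, I ≠ ⊥ → J ≠ ⊥ → ∀ x ∈ I * J, ∃ i ∈ I, ∃ j ∈ J, x = i * j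

/-- The ring `A + X·B[X]`: polynomials over `B` whose constant coefficient lies
in the subring `A`. -/
def constSubring {B : Type*} [CommRing B] (A : Subring B) : Subring (Polynomial B) where
  carrier := {f | f.coeff 0 ∈ A}
  zero_mem' := by simpa using zero_mem A
  one_mem' := by simpa using one_mem A
  add_mem' := by
    intro f g hf hg
    simpa using add_mem hf hg
  neg_mem' := by
    intro f hf
    simpa using A.neg_mem hf
  mul_mem' := by
    intro f g hf hg
    simpa [Polynomial.mul_coeff_zero] using mul_mem hf hg

/-- The field extension `K ⊆ L` is vs-closed if for every pair of `K`-subspaces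
`V, W` of `L`, the `K`-span of `P(V,W) = {vw : v ∈ V, w ∈ W}` equals `P(V,W)`. -/
def VSClosed (K L : Type*) [Field K] [Field L] [Algebra K L] : Prop :=
  ∀ V W : Submodule K L,
    (Submodule.span K {x : L | ∃ v ∈ V, ∃ w ∈ W, x = v * w} : Set L) =
      {x : L | ∃ v ∈ V, ∃ w ∈ W, x = v * w}

/-!
Every ideal `I` of `R = K + X L[X]` (indeed every `R`-submodule of `L[X]`) has the form
`f (V + X L[X])` for a polynomial `f` and a nonzero `K`-subspace `V` of `L`: take `f` a generator
of the ideal of `L[X]` generated by `I`, and `V` the constants `v` with `f v ∈ I`. Multiplying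
two such sets gives `fg (VW + X L[X])`, where `VW` is the span of the products, while a single
product `f (v + X s) · g (w + X t)` has constant part `v w`. So when `K ⊆ L` is vs-closed, every
element of `IJ` factors. Conversely, for `I = XV + X²L[X]` and `J = XW + X²L[X]`, the coefficient
of `X²` in a product `i j` is the product of the coefficients of `X` in `i` and `j`, so if `R` is
condensed, factoring `u X² ∈ IJ` writes any `u ∈ VW` as some `v w`.
-/

open Polynomial Pointwise

section constSubring

variable {B : Type*} [CommRing B] {A : Subring B}

@[simp]
lemma mem_constSubring {p : B[X]} : p ∈ constSubring A ↔ p.coeff 0 ∈ A := Iff.rfl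

lemma X_mul_mem_constSubring (p : B[X]) : X * p ∈ constSubring A := by
  simp [zero_mem]

lemma X_mul_mul_mem_of_mem_span (S : Submodule (constSubring A) B[X]) {q : B[X]}
    (hq : q ∈ Ideal.span (S : Set B[X])) (s : B[X]) : X * s * q ∈ S := by
  induction hq using Submodule.span_induction generalizing s with
  | mem p hp => exact S.smul_mem ⟨X * s, X_mul_mem_constSubring s⟩ hp
  | zero => simp
  | add p q _ _ hp hq => simpa only [mul_add] using S.add_mem (hp s) (hq s)
  | smul c p _ hp =>
    convert hp (s * c) using 1
    simp only [smul_eq_mul]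
    ring

end constSubring

lemma coeff_mul_two_of_coeff_zero {R : Type*} [CommSemiring R] {p q : R[X]}
    (hp : p.coeff 0 = 0) (hq : q.coeff 0 = 0) : (p * q).coeff 2 = p.coeff 1 * q.coeff 1 := by
  simp [coeff_mul, Finset.Nat.antidiagonal_succ, hp, hq]

section mulSubspaceAddX

variable {K L : Type*} [CommSemiring K] [CommRing L] [Algebra K L]

lemma exists_ne_zero_mul_eq {V W : Submodule K L} (hV : V ≠ ⊥) {u : L}
    (hu : u ∈ (V : Set L) * (W : Set L)) : ∃ v ∈ V, v ≠ 0 ∧ ∃ w ∈ W, v * w = u := by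
  obtain ⟨v, hv, w, hw, rfl⟩ := hu
  by_cases hv0 : v = 0
  · obtain ⟨v₀, hv₀, hv₀0⟩ := (Submodule.ne_bot_iff V).mp hV
    exact ⟨v₀, hv₀, hv₀0, 0, W.zero_mem, by simp [hv0]⟩
  · exact ⟨v, hv, hv0, w, hw, rfl⟩

/-- The set `f (V + X L[X])`. -/
def mulSubspaceAddX (f : L[X]) (V : Submodule K L) : Set L[X] :=
  {p | ∃ v ∈ V, ∃ s, p = f * (C v + X * s)}

lemma add_mem_mulSubspaceAddX {f : L[X]} {V : Submodule K L} {p q : L[X]}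
    (hp : p ∈ mulSubspaceAddX f V) (hq : q ∈ mulSubspaceAddX f V) :
    p + q ∈ mulSubspaceAddX f V := by
  obtain ⟨v, hv, s, rfl⟩ := hp
  obtain ⟨w, hw, t, rfl⟩ := hq
  exact ⟨v + w, V.add_mem hv hw, s + t, by rw [C_add]; ring⟩

lemma mul_mem_mulSubspaceAddX_mul {f g : L[X]} {V W : Submodule K L} {p q : L[X]}
    (hp : p ∈ mulSubspaceAddX f V) (hq : q ∈ mulSubspaceAddX g W) :
    p * q ∈ mulSubspaceAddX (f * g) (V * W) := by
  obtain ⟨v, hv, s, rfl⟩ := hp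
  obtain ⟨w, hw, t, rfl⟩ := hq
  exact ⟨v * w, Submodule.mul_mem_mul hv hw, C v * t + C w * s + X * s * t,
    by rw [C_mul]; ring⟩

lemma mulSubspaceAddX_bot (f : L[X]) :
    mulSubspaceAddX f (⊥ : Submodule K L) = mulSubspaceAddX (f * X) (⊤ : Submodule K L) := by
  ext p
  constructor
  · rintro ⟨v, hv, s, rfl⟩
    rw [Submodule.mem_bot] at hv
    refine ⟨s.coeff 0, Submodule.mem_top, s.divX, ?_⟩
    rw [hv, C_0, zero_add]
    linear_combination (-(f * X)) * X_mul_divX_add s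
  · rintro ⟨v, -, s, rfl⟩
    exact ⟨0, Submodule.zero_mem _, C v + X * s, by rw [C_0]; ring⟩

end mulSubspaceAddX

section fields

variable {K L : Type*} [Field K] [Field L] [Algebra K L]

lemma vsClosed_iff_mul_subset :
    VSClosed K L ↔
      ∀ V W : Submodule K L, ((V * W : Submodule K L) : Set L) ⊆ (V : Set L) * (W : Set L) := by
  have hprod (V W : Submodule K L) :
      {x : L | ∃ v ∈ V, ∃ w ∈ W, x = v * w} = (V : Set L) * (W : Set L) := by
    ext x
    simp only [Set.mem_ofPred_eq, Set.mem_mul, SetLike.mem_coe, eq_comm]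
  refine forall₂_congr fun V W => ?_
  rw [hprod, Submodule.mul_eq_span_mul_set]
  exact ⟨fun h => h.subset, fun h => h.antisymm Submodule.subset_span⟩

lemma mulSubspaceAddX_mul_subset {f g : L[X]} {V W : Submodule K L} (hV : V ≠ ⊥)
    (hVW : ((V * W : Submodule K L) : Set L) ⊆ (V : Set L) * (W : Set L)) :
    mulSubspaceAddX (f * g) (V * W) ⊆ mulSubspaceAddX f V * mulSubspaceAddX g W := by
  rintro _ ⟨u, hu, s, rfl⟩
  obtain ⟨v, hv, hv0, w, hw, rfl⟩ := exists_ne_zero_mul_eq hV (hVW hu)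
  refine ⟨f * C v, ⟨v, hv, 0, by ring⟩, g * (C w + X * (C v⁻¹ * s)), ⟨w, hw, _, rfl⟩, ?_⟩
  have hvv : C v * C v⁻¹ = 1 := by rw [← C_mul, mul_inv_cancel₀ hv0, C_1]
  rw [C_mul]
  linear_combination f * g * X * s * hvv

theorem exists_coe_eq_mulSubspaceAddX
    (S : Submodule (constSubring (algebraMap K L).range) L[X]) :
    ∃ (f : L[X]) (V : Submodule K L), V ≠ ⊥ ∧ (S : Set L[X]) = mulSubspaceAddX f V := by
  obtain ⟨f, hf⟩ := (IsPrincipalIdealRing.principal (Ideal.span (S : Set L[X]))).principal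
  have hdvd : ∀ p ∈ S, f ∣ p := fun p hp =>
    Ideal.mem_span_singleton.mp (hf ▸ Ideal.subset_span hp :)
  have hXf (s : L[X]) : X * s * f ∈ S :=
    X_mul_mul_mem_of_mem_span S (by rw [hf]; exact Ideal.mem_span_singleton_self f) s
  let V : Submodule K L :=
    { carrier := {v | f * C v ∈ S}
      zero_mem' := by simp
      add_mem' := fun {v w} hv hw => by simpa [C_add, mul_add] using S.add_mem hv hw
      smul_mem' := fun k v hv => by
        show f * C (k • v) ∈ S
        convert S.smul_mem ⟨C (algebraMap K L k), by simp⟩ hv using 1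
        rw [Algebra.smul_def, C_mul, Subring.smul_def]
        ring }
  have hS : (S : Set L[X]) = mulSubspaceAddX f V := by
    ext p
    constructor
    · intro hp
      obtain ⟨q, rfl⟩ := hdvd p hp
      refine ⟨q.coeff 0, ?_, q.divX, by rw [add_comm, X_mul_divX_add]⟩
      have hconst : f * C (q.coeff 0) = f * q - X * q.divX * f := by
        linear_combination f * X_mul_divX_add q
      show f * C (q.coeff 0) ∈ S
      rw [hconst]
      exact S.sub_mem hp (hXf _)
    · rintro ⟨v, hv, s, rfl⟩
      rw [mul_add, mul_comm f (X * s)]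
      exact S.add_mem hv (hXf s)
  by_cases hV : V = ⊥
  · exact ⟨f * X, ⊤, top_ne_bot, by rw [hS, hV, mulSubspaceAddX_bot]⟩
  · exact ⟨f, V, hV, hS⟩

theorem exists_image_eq_mulSubspaceAddX (I : Ideal (constSubring (algebraMap K L).range)) :
    ∃ (f : L[X]) (V : Submodule K L), V ≠ ⊥ ∧
      Subtype.val '' (I : Set (constSubring (algebraMap K L).range)) = mulSubspaceAddX f V :=
  exists_coe_eq_mulSubspaceAddX (Submodule.map (Algebra.linearMap _ L[X]) I)

theorem isCondensed_of_vsClosed (h : VSClosed K L) :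
    IsCondensed (constSubring (algebraMap K L).range) := by
  intro I J _ _ x hx
  obtain ⟨f, V, hV, hI⟩ := exists_image_eq_mulSubspaceAddX I
  obtain ⟨g, W, -, hJ⟩ := exists_image_eq_mulSubspaceAddX J
  have hx' : (x : L[X]) ∈ mulSubspaceAddX (f * g) (V * W) := by
    refine Submodule.mul_induction_on hx (fun a ha b hb => ?_)
      (fun a b ha hb => by simpa using add_mem_mulSubspaceAddX ha hb)
    exact mul_mem_mulSubspaceAddX_mul (hI ▸ ⟨a, ha, rfl⟩) (hJ ▸ ⟨b, hb, rfl⟩)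
  have hfactor := mulSubspaceAddX_mul_subset hV (vsClosed_iff_mul_subset.mp h V W) hx'
  rw [← hI, ← hJ] at hfactor
  obtain ⟨_, ⟨i, hi, rfl⟩, _, ⟨j, hj, rfl⟩, hij⟩ := hfactor
  exact ⟨i, hi, j, hj, Subtype.ext hij.symm⟩

/-- The ideal `X V + X² L[X]` of `K + X L[X]`. -/
def idealOfCoeffOne (V : Submodule K L) : Ideal (constSubring (algebraMap K L).range) where
  carrier := {a | (a : L[X]).coeff 0 = 0 ∧ (a : L[X]).coeff 1 ∈ V}
  zero_mem' := ⟨coeff_zero 0, by simp⟩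
  add_mem' := fun ⟨ha0, ha1⟩ ⟨hb0, hb1⟩ =>
    ⟨by simp [ha0, hb0], by simpa using V.add_mem ha1 hb1⟩
  smul_mem' := by
    rintro c a ⟨ha0, ha1⟩
    obtain ⟨k, hk⟩ := c.2
    refine ⟨by simp [coeff_mul, ha0], ?_⟩
    have hcoeff : ((c : L[X]) * a).coeff 1 = k • (a : L[X]).coeff 1 := by
      simp [coeff_mul, Finset.Nat.antidiagonal_succ, ha0, Algebra.smul_def, hk]
    exact hcoeff ▸ V.smul_mem k ha1

lemma idealOfCoeffOne_ne_bot (V : Submodule K L) : idealOfCoeffOne V ≠ ⊥ := by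
  rw [Submodule.ne_bot_iff]
  exact ⟨⟨X * X, X_mul_mem_constSubring X⟩, ⟨by simp, by simp [coeff_X]⟩,
    fun h => X_ne_zero (mul_self_eq_zero.mp (congrArg Subtype.val h))⟩

lemma exists_mem_idealOfCoeffOne_mul_coe_eq {V W : Submodule K L} {u : L} (hu : u ∈ V * W) :
    ∃ a ∈ idealOfCoeffOne V * idealOfCoeffOne W, (a : L[X]) = C u * X ^ 2 := by
  refine Submodule.mul_induction_on hu (fun v hv w hw => ?_) ?_
  · refine ⟨⟨X * C v, X_mul_mem_constSubring _⟩ * ⟨X * C w, X_mul_mem_constSubring _⟩,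
      Ideal.mul_mem_mul ⟨by simp, by simpa [coeff_X_mul]⟩ ⟨by simp, by simpa [coeff_X_mul]⟩, ?_⟩
    simp only [MulMemClass.coe_mul, C_mul]
    ring
  · rintro _ _ ⟨a, ha, hau⟩ ⟨b, hb, hbu⟩
    exact ⟨a + b, add_mem ha hb, by simp only [AddMemClass.coe_add, hau, hbu, C_add]; ring⟩

theorem vsClosed_of_isCondensed (h : IsCondensed (constSubring (algebraMap K L).range)) :
    VSClosed K L := by
  refine vsClosed_iff_mul_subset.mpr fun V W u hu => ?_
  obtain ⟨a, ha, hau⟩ := exists_mem_idealOfCoeffOne_mul_coe_eq hu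
  obtain ⟨i, ⟨hi0, hi1⟩, j, ⟨hj0, hj1⟩, rfl⟩ :=
    h _ _ (idealOfCoeffOne_ne_bot V) (idealOfCoeffOne_ne_bot W) a ha
  refine ⟨_, hi1, _, hj1, ?_⟩
  have := congrArg (coeff · 2) hau
  simpa [coeff_mul_two_of_coeff_zero hi0 hj0] using this

end fields

theorem stmt17 (K L : Type*) [Field K] [Field L] [Algebra K L] :
    IsCondensed (constSubring (algebraMap K L).range) ↔ VSClosed K L :=
  ⟨vsClosed_of_isCondensed, isCondensed_of_vsClosed⟩
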